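/- Let T : ℝ³ → ℝ³ be twice continuously differentiable with DT(y) invertible for every y, and let B : ℝ³ → ℝ³ be continuously differentiable. Then for every x ∈ ℝ³, (curl B)(T x) = (1 / det DT(x)) · DT(x) · curl( y ↦ (DT(y))ᵀ · B(T y) )(x) (the covariant Piola identity for the curl). -/

import Mathlib

open Matrix

/-- Jacobian matrix of a map `ℝ³ → ℝ³`, with entries `(DT(x))ᵢⱼ = ∂ⱼTᵢ(x)`. -/
noncomputable def jacR (T : (Fin 3 → ℝ) → (Fin 3 → ℝ)) (x : Fin 3 → ℝ) :
    Matrix (Fin 3) (Fin 3) ℝ :=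
  Matrix.of fun i j => fderiv ℝ T x (Pi.single j 1) i

/-- Partial derivative in direction `i` of a field `ℝ³ → ℝ³`. -/
noncomputable def pdR (i : Fin 3) (F : (Fin 3 → ℝ) → (Fin 3 → ℝ)) (x : Fin 3 → ℝ) :
    Fin 3 → ℝ :=
  fderiv ℝ F x (Pi.single i 1)

/-- Curl of a field `ℝ³ → ℝ³`. -/
noncomputable def curlR (F : (Fin 3 → ℝ) → (Fin 3 → ℝ)) (x : Fin 3 → ℝ) : Fin 3 → ℝ :=
  ![pdR 1 F x 2 - pdR 2 F x 1,
    pdR 2 F x 0 - pdR 0 F x 2,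
    pdR 0 F x 1 - pdR 1 F x 0]

/-! Writing `G y = DT(y)ᵀ B(T y)`, the product and chain rules give
`DG(x) = H + DT(x)ᵀ DB(T x) DT(x)` with `Hᵢⱼ = ∂ⱼ∂ᵢT(x) · B(T x)`, which is symmetric by Schwarz.
The curl only sees the antisymmetric part of a Jacobian, and for `3 × 3` matrices
`Jᵀ (M - Mᵀ) J` is the skew matrix of `adj(J) c` when `M - Mᵀ` is that of `c`. Hence
`curl G (x) = adj(DT(x)) curl B (T x)`, and multiplying by `DT(x)` gives `det DT(x) · curl B (T x)`. -/

section

variable {𝕜 E ι : Type*} [NontriviallyNormedField 𝕜] [NormedAddCommGroup E] [NormedSpace 𝕜 E]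
  [Fintype ι] {u v : E → ι → 𝕜} {x : E}

theorem fderiv_dotProduct_apply (hu : DifferentiableAt 𝕜 u x) (hv : DifferentiableAt 𝕜 v x)
    (h : E) :
    fderiv 𝕜 (fun y => u y ⬝ᵥ v y) x h = fderiv 𝕜 u x h ⬝ᵥ v x + u x ⬝ᵥ fderiv 𝕜 v x h := by
  have hu' := differentiableAt_pi.1 hu
  have hv' := differentiableAt_pi.1 hv
  simp only [dotProduct]
  rw [fderiv_fun_sum fun i _ => (hu' i).fun_mul (hv' i)]
  simp [fderiv_fun_mul (hu' _) (hv' _), fderiv_apply hu, fderiv_apply hv, Finset.sum_add_distrib,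
    mul_comm, add_comm]

end

section AxialVector

variable {R : Type*}

/-- The axial vector of `A - Aᵀ` (without the factor `1/2`). -/
def axialVector [Ring R] (A : Matrix (Fin 3) (Fin 3) R) : Fin 3 → R :=
  ![A 2 1 - A 1 2, A 0 2 - A 2 0, A 1 0 - A 0 1]

theorem axialVector_add_of_isSymm [Ring R] {S : Matrix (Fin 3) (Fin 3) R} (hS : S.IsSymm)
    (A : Matrix (Fin 3) (Fin 3) R) : axialVector (S + A) = axialVector A := by
  have h := fun i j => hS.apply i j
  ext i; fin_cases i <;> simp [axialVector, h 1 2, h 2 0, h 0 1]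

theorem axialVector_transpose_mul_mul [CommRing R] (J M : Matrix (Fin 3) (Fin 3) R) :
    axialVector (Jᵀ * M * J) = J.adjugate *ᵥ axialVector M := by
  ext i; fin_cases i <;>
  · simp only [axialVector, Matrix.adjugate_fin_three, Matrix.mul_apply, Matrix.mulVec,
      dotProduct, Matrix.transpose_apply, Matrix.of_apply, Fin.sum_univ_three, Fin.isValue,
      Fin.zero_eta, Fin.mk_one, Fin.reduceFinMk, Matrix.cons_val_zero, Matrix.cons_val_one,
      Matrix.cons_val, Matrix.cons_val', Matrix.cons_val_fin_one]
    ring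

end AxialVector

theorem curlR_eq_axialVector_jacR (F : (Fin 3 → ℝ) → (Fin 3 → ℝ)) (x : Fin 3 → ℝ) :
    curlR F x = axialVector (jacR F x) := rfl

theorem jacR_mulVec (T : (Fin 3 → ℝ) → (Fin 3 → ℝ)) (x v : Fin 3 → ℝ) :
    jacR T x *ᵥ v = fderiv ℝ T x v := by
  have : jacR T x = LinearMap.toMatrix' (fderiv ℝ T x : (Fin 3 → ℝ) →ₗ[ℝ] (Fin 3 → ℝ)) := by
    ext i j; rfl
  rw [this, LinearMap.toMatrix'_mulVec]; rfl

section Pullback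

variable {T B : (Fin 3 → ℝ) → (Fin 3 → ℝ)} {x : Fin 3 → ℝ}

theorem jacR_pullback (hT : DifferentiableAt ℝ T x) (hDT : DifferentiableAt ℝ (fderiv ℝ T) x)
    (hB : DifferentiableAt ℝ B (T x)) :
    jacR (fun y => (jacR T y)ᵀ *ᵥ B (T y)) x =
      Matrix.of (fun i j => fderiv ℝ (fderiv ℝ T) x (Pi.single j 1) (Pi.single i 1) ⬝ᵥ B (T x)) +
        (jacR T x)ᵀ * jacR B (T x) * jacR T x := by
  have hpartial : ∀ i, HasFDerivAt (fun y => fderiv ℝ T y (Pi.single i 1))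
      ((ContinuousLinearMap.apply ℝ _ (Pi.single i 1)).comp (fderiv ℝ (fderiv ℝ T) x)) x :=
    fun i => HasFDerivAt.comp (g := fun L : (Fin 3 → ℝ) →L[ℝ] (Fin 3 → ℝ) => L (Pi.single i 1)) x
      (ContinuousLinearMap.apply ℝ (Fin 3 → ℝ) (Pi.single i 1)).hasFDerivAt hDT.hasFDerivAt
  have hcomp : DifferentiableAt ℝ (fun y => B (T y)) x := hB.comp x hT
  have hdiff : ∀ i, DifferentiableAt ℝ (fun y => fderiv ℝ T y (Pi.single i 1) ⬝ᵥ B (T y)) x :=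
    fun i => by
      have := (hpartial i).differentiableAt
      simp only [dotProduct]
      fun_prop
  ext i j
  have hentry : ((jacR T x)ᵀ * jacR B (T x) * jacR T x) i j =
      fderiv ℝ T x (Pi.single i 1) ⬝ᵥ fderiv ℝ B (T x) (fderiv ℝ T x (Pi.single j 1)) := by
    rw [← Matrix.col_apply ((jacR T x)ᵀ * jacR B (T x) * jacR T x) j i,
      ← Matrix.mulVec_single_one, ← Matrix.mulVec_mulVec, ← Matrix.mulVec_mulVec, jacR_mulVec,
      jacR_mulVec]
    rfl
  change fderiv ℝ (fun y i => fderiv ℝ T y (Pi.single i 1) ⬝ᵥ B (T y)) x (Pi.single j 1) i = _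
  rw [fderiv_pi hdiff, ContinuousLinearMap.pi_apply,
    fderiv_dotProduct_apply (hpartial i).differentiableAt hcomp, (hpartial i).fderiv,
    fderiv_fun_comp x hB hT, Matrix.add_apply, hentry]
  rfl

theorem curlR_pullback (hT : DifferentiableAt ℝ T x) (hDT : DifferentiableAt ℝ (fderiv ℝ T) x)
    (hsymm : IsSymmSndFDerivAt ℝ T x) (hB : DifferentiableAt ℝ B (T x)) :
    curlR (fun y => (jacR T y)ᵀ *ᵥ B (T y)) x = (jacR T x).adjugate *ᵥ curlR B (T x) := by
  have hHessian : (Matrix.of fun i j =>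
      fderiv ℝ (fderiv ℝ T) x (Pi.single j 1) (Pi.single i 1) ⬝ᵥ B (T x)).IsSymm :=
    Matrix.IsSymm.ext fun i j => by simp only [Matrix.of_apply, hsymm (Pi.single i 1)]
  rw [curlR_eq_axialVector_jacR, jacR_pullback hT hDT hB, axialVector_add_of_isSymm hHessian,
    axialVector_transpose_mul_mul, curlR_eq_axialVector_jacR]

end Pullback

/-- Covariant Piola identity for the curl:
`(curl B)(T x) = (1/det DT(x)) · DT(x) · curl(y ↦ DT(y)ᵀ · B(T y))(x)`. -/
theorem curl_piola_identity
    (T B : (Fin 3 → ℝ) → (Fin 3 → ℝ))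
    (hT : ContDiff ℝ 2 T) (hTinv : ∀ y, IsUnit (jacR T y))
    (hB : ContDiff ℝ 1 B) (x : Fin 3 → ℝ) :
    curlR B (T x) =
      ((jacR T x).det)⁻¹ •
        (jacR T x *ᵥ curlR (fun y => (jacR T y)ᵀ *ᵥ B (T y)) x) := by
  have hdet : (jacR T x).det ≠ 0 := ((Matrix.isUnit_iff_isUnit_det _).mp (hTinv x)).ne_zero
  have hsymm : IsSymmSndFDerivAt ℝ T x := hT.contDiffAt.isSymmSndFDerivAt (by simp)
  rw [curlR_pullback (hT.differentiable (by norm_num) x)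
      ((hT.fderiv_right (m := 1) (by norm_num)).differentiable one_ne_zero x) hsymm
      (hB.differentiable one_ne_zero (T x)),
    ← Matrix.cramer_eq_adjugate_mulVec, Matrix.mulVec_cramer, inv_smul_smul₀ hdet]
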